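/- For every finite type σ over Ω and every countable ordinal α, the iteration functional Iter_α^σ is hereditarily monotone, i.e., Iter_α^σ ∈ Ω^mon_{(σ→σ)→(σ→σ)}: it maps hereditarily monotone f to hereditarily monotone Iter_α f, and Iter_α f ≤ Iter_α f' whenever f ≤ f' are hereditarily monotone. -/

import Mathlib

/-!  Framework: finite type structure over Ω = countable ordinals,
     limsup/liminf, transfinite iteration functionals, hereditarily
     positive and hereditarily monotone functionals. -/

noncomputable section
namespace IterOrd

open Ordinal

theorem omega1_pos : (0 : Ordinal) < ω₁ := Ordinal.omega0_pos.trans Ordinal.omega0_lt_omega_one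

/-- `Om` is Ω, the set of countable ordinals (ordinals `< ω₁`). -/
abbrev Om : Type 1 := {o : Ordinal // o < ω₁}

/-- Infimum of a subset of Ω (the minimum for nonempty sets; `0` for `∅`). -/
def infOm (s : Set Om) : Om :=
  ⟨sInf (Subtype.val '' s), by
    rcases (Subtype.val '' s).eq_empty_or_nonempty with h | h
    · rw [h]; simpa using omega1_pos
    · obtain ⟨x, _, he⟩ := csInf_mem h
      exact he ▸ x.2⟩

/-- Supremum of a subset of Ω.  Whenever the supremum of the set exists in Ω
(in particular for every countable subset, by regularity of `ω₁`) this is the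
genuine supremum; otherwise it takes a junk value. -/
def supOm (s : Set Om) : Om :=
  if h : sSup (Subtype.val '' s) < ω₁ then ⟨sSup (Subtype.val '' s), h⟩ else ⟨0, omega1_pos⟩

/-- Finite types over the base type `o` (interpreted as Ω). -/
inductive Ty : Type
  | base : Ty
  | arrow : Ty → Ty → Ty
deriving DecidableEq

/-- The full type structure over Ω: `El base = Ω` and
`El (arrow σ τ)` is the set of all functions `El σ → El τ`. -/
@[reducible] def El : Ty → Type 1
  | .base => Om
  | .arrow σ τ => El σ → El τ

/-- The order on each `El σ`: the ordinal order at base type, pointwise at arrow types. -/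
def Le : (σ : Ty) → El σ → El σ → Prop
  | .base => fun x y => x ≤ y
  | .arrow σ τ => fun f g => ∀ x : El σ, Le τ (f x) (g x)

/-- Suprema, computed pointwise at function types. -/
def supEl : (σ : Ty) → Set (El σ) → El σ
  | .base => supOm
  | .arrow σ τ => fun S (x : El σ) => supEl τ ((fun f : El (.arrow σ τ) => f x) '' S)

/-- Infima, computed pointwise at function types. -/
def infEl : (σ : Ty) → Set (El σ) → El σ
  | .base => infOm
  | .arrow σ τ => fun S (x : El σ) => infEl τ ((fun f : El (.arrow σ τ) => f x) '' S)

/-- `limsup_{ξ→ζ} f ξ = inf_{γ<ζ} sup_{γ≤ξ<ζ} f ξ`. -/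
def limsupEl (σ : Ty) (ζ : Ordinal) (f : ∀ ξ : Ordinal, ξ < ζ → El σ) : El σ :=
  infEl σ {y | ∃ γ, ∃ _ : γ < ζ, y = supEl σ {z | ∃ ξ, ∃ h : ξ < ζ, γ ≤ ξ ∧ z = f ξ h}}

/-- `liminf_{ξ→ζ} f ξ = sup_{γ<ζ} inf_{γ≤ξ<ζ} f ξ`. -/
def liminfEl (σ : Ty) (ζ : Ordinal) (f : ∀ ξ : Ordinal, ξ < ζ → El σ) : El σ :=
  supEl σ {y | ∃ γ, ∃ _ : γ < ζ, y = infEl σ {z | ∃ ξ, ∃ h : ξ < ζ, γ ≤ ξ ∧ z = f ξ h}}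

/-- `limsup` of a ζ-indexed sequence of ordinals. -/
def oLimsup (ζ : Ordinal) (a : Ordinal → Ordinal) : Ordinal :=
  sInf {s | ∃ γ, γ < ζ ∧ s = sSup (a '' {ξ | γ ≤ ξ ∧ ξ < ζ})}

/-- `liminf` of a ζ-indexed sequence of ordinals. -/
def oLiminf (ζ : Ordinal) (a : Ordinal → Ordinal) : Ordinal :=
  sSup {s | ∃ γ, γ < ζ ∧ s = sInf (a '' {ξ | γ ≤ ξ ∧ ξ < ζ})}

/-- The α-iteration functional of type σ:
`Iter 0 f x = x`, `Iter (α+1) f x = f (Iter α f x)`, and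
`Iter μ f x = limsup_{ξ→μ} Iter ξ f x` for limit μ. -/
def Iter (σ : Ty) (α : Ordinal) : (El σ → El σ) → El σ → El σ :=
  Ordinal.limitRecOn (motive := fun _ => (El σ → El σ) → El σ → El σ) α
    (fun _ x => x)
    (fun _ ih f x => f (ih f x))
    (fun μ _ ih f x => limsupEl σ μ (fun ξ h => ih ξ h f x))

/-- The pair (hereditarily positive, ≤hp), defined simultaneously by recursion on the type.
Every element of `Ω` and of `Ω_{ρ→τ}` with `ρ ≠ τ` is h.p., and `≤hp` there is `≤`;
`f : Ω_{τ→τ}` is h.p. iff it preserves h.p., is inflationary on h.p. arguments and is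
monotone (w.r.t. `≤hp`) on h.p. arguments; `f ≤hp f'` on `Ω_{τ→τ}` iff `f x ≤hp f' x`
for every h.p. `x`. -/
def HPaux : (σ : Ty) → (El σ → Prop) × (El σ → El σ → Prop)
  | .base => ⟨fun _ => True, fun x y => x ≤ y⟩
  | .arrow ρ τ =>
      ⟨fun f =>
        if h : ρ = τ then
          (∀ x, (HPaux ρ).1 x → (HPaux τ).1 (f x)) ∧
          (∀ x, (HPaux ρ).1 x → (HPaux τ).2 (cast (congrArg El h) x) (f x)) ∧
          (∀ x y, (HPaux ρ).1 x → (HPaux ρ).1 y → (HPaux ρ).2 x y → (HPaux τ).2 (f x) (f y))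
        else True,
       fun f g =>
        if ρ = τ then ∀ x, (HPaux ρ).1 x → (HPaux τ).2 (f x) (g x)
        else Le (.arrow ρ τ) f g⟩

/-- Hereditarily positive functionals. -/
def Hp (σ : Ty) : El σ → Prop := (HPaux σ).1

/-- The order `≤hp`. -/
def HpLe (σ : Ty) : El σ → El σ → Prop := (HPaux σ).2

/-- `f =hp g` iff `f ≤hp g` and `g ≤hp f`. -/
def HpEq (σ : Ty) (f g : El σ) : Prop := HpLe σ f g ∧ HpLe σ g f

/-- The pair (hereditarily monotone, ≤ on the hereditarily monotone structure),
by recursion on the type.  `f` is hereditarily monotone iff it maps hereditarily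
monotone arguments to hereditarily monotone values, monotonically; the order is
pointwise over hereditarily monotone arguments (i.e. the order of `Ω^mon`). -/
def HMaux : (σ : Ty) → (El σ → Prop) × (El σ → El σ → Prop)
  | .base => ⟨fun _ => True, fun x y => x ≤ y⟩
  | .arrow σ τ =>
      ⟨fun f =>
        (∀ x, (HMaux σ).1 x → (HMaux τ).1 (f x)) ∧
        (∀ x y, (HMaux σ).1 x → (HMaux σ).1 y → (HMaux σ).2 x y → (HMaux τ).2 (f x) (f y)),
       fun f g => ∀ x, (HMaux σ).1 x → (HMaux τ).2 (f x) (g x)⟩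

/-- Hereditarily monotone functionals: the members of the type structure `Ω^mon`. -/
def HM (σ : Ty) : El σ → Prop := (HMaux σ).1

/-- The (pointwise) order of the hereditarily monotone type structure `Ω^mon`. -/
def LeHM (σ : Ty) : El σ → El σ → Prop := (HMaux σ).2

/-- Equality in the hereditarily monotone type structure `Ω^mon`. -/
def EqHM (σ : Ty) (f g : El σ) : Prop := LeHM σ f g ∧ LeHM σ g f

/-!
Ω^mon is closed under countable suprema (a countable supremum of countable ordinals is countable,
by regularity of `ω₁`) and under arbitrary infima, hence under `limsup` along a countable ordinal.
Induction on `α`: `Iter_0` is the constant identity, and for limit `μ`, `Iter_μ` is itself the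
`limsup` of the `Iter_ξ` in the type structure, since `limsup` is computed pointwise. At successors
`Iter_{α+1} f = f ∘ Iter_α f`, and `f ≤ g` gives `f (Iter_α f x) ≤ f (Iter_α g x) ≤ g (Iter_α g x)`,
first by the induction hypothesis and monotonicity of `f`, then pointwise.
-/

section HereditarilyMonotone

lemma leHM_refl : ∀ (σ : Ty) (x : El σ), HM σ x → LeHM σ x x
  | .base, x, _ => le_refl x
  | .arrow _ τ, f, hf => fun x hx => leHM_refl τ (f x) (hf.1 x hx)

lemma leHM_trans : ∀ (σ : Ty) {a b c : El σ}, LeHM σ a b → LeHM σ b c → LeHM σ a c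
  | .base, _, _, _, h₁, h₂ => le_trans h₁ h₂
  | .arrow _ τ, _, _, _, h₁, h₂ => fun x hx => leHM_trans τ (h₁ x hx) (h₂ x hx)

lemma sSup_val_lt_omega_one {s : Set Om} (hs : s.Countable) : sSup (Subtype.val '' s) < ω₁ := by
  have := hs.to_subtype
  rw [sSup_image']
  exact Ordinal.iSup_lt_omega_one fun x => x.1.2

variable {ι : Type*}

lemma supOm_image_mono {I : Set ι} (hI : I.Countable) {f g : ι → Om}
    (h : ∀ i ∈ I, f i ≤ g i) : supOm (f '' I) ≤ supOm (g '' I) := by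
  have hg := sSup_val_lt_omega_one (hI.image g)
  have hbdd : BddAbove (Subtype.val '' (g '' I)) := ⟨ω₁, Set.forall_mem_image.2 fun x _ => x.2.le⟩
  have hle : sSup (Subtype.val '' (f '' I)) ≤ sSup (Subtype.val '' (g '' I)) := by
    rcases I.eq_empty_or_nonempty with rfl | hne
    · simp
    · refine csSup_le ((hne.image _).image _) (Set.forall_mem_image.2 <| Set.forall_mem_image.2 ?_)
      intro i hi
      exact (Subtype.coe_le_coe.2 (h i hi)).trans (le_csSup hbdd ⟨g i, ⟨i, hi, rfl⟩, rfl⟩)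
  unfold supOm
  rw [dif_pos hg, dif_pos (hle.trans_lt hg)]
  exact hle

lemma infOm_image_mono {I : Set ι} {f g : ι → Om} (h : ∀ i ∈ I, f i ≤ g i) :
    infOm (f '' I) ≤ infOm (g '' I) := by
  rcases I.eq_empty_or_nonempty with rfl | hne
  · simp
  · show sInf (Subtype.val '' (f '' I)) ≤ sInf (Subtype.val '' (g '' I))
    refine le_csInf ((hne.image _).image _) (Set.forall_mem_image.2 <| Set.forall_mem_image.2 ?_)
    intro i hi
    have hfi : (f i : Ordinal) ∈ Subtype.val '' (f '' I) := ⟨f i, ⟨i, hi, rfl⟩, rfl⟩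
    exact (csInf_le (OrderBot.bddBelow _) hfi).trans (Subtype.coe_le_coe.2 (h i hi))

lemma supEl_image_mono : ∀ (σ : Ty) {I : Set ι}, I.Countable → ∀ {f g : ι → El σ},
    (∀ i ∈ I, LeHM σ (f i) (g i)) → LeHM σ (supEl σ (f '' I)) (supEl σ (g '' I))
  | .base, _, hI, _, _, h => supOm_image_mono hI h
  | .arrow _ τ, _, hI, f, g, h => fun x hx => by
      show LeHM τ (supEl τ ((· x) '' (f '' _))) (supEl τ ((· x) '' (g '' _)))
      simp only [Set.image_image]
      exact supEl_image_mono τ hI fun i hi => h i hi x hx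

lemma infEl_image_mono : ∀ (σ : Ty) {I : Set ι} {f g : ι → El σ},
    (∀ i ∈ I, LeHM σ (f i) (g i)) → LeHM σ (infEl σ (f '' I)) (infEl σ (g '' I))
  | .base, _, _, _, h => infOm_image_mono h
  | .arrow _ τ, _, f, g, h => fun x hx => by
      show LeHM τ (infEl τ ((· x) '' (f '' _))) (infEl τ ((· x) '' (g '' _)))
      simp only [Set.image_image]
      exact infEl_image_mono τ fun i hi => h i hi x hx

lemma hm_supEl : ∀ (σ : Ty) {S : Set (El σ)}, S.Countable → (∀ f ∈ S, HM σ f) → HM σ (supEl σ S)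
  | .base, _, _, _ => trivial
  | .arrow _ τ, _, hS, hm =>
      ⟨fun x hx => hm_supEl τ (hS.image _) (Set.forall_mem_image.2 fun f hf => (hm f hf).1 x hx),
       fun x y hx hy hxy => supEl_image_mono τ hS fun f hf => (hm f hf).2 x y hx hy hxy⟩

lemma hm_infEl : ∀ (σ : Ty) {S : Set (El σ)}, (∀ f ∈ S, HM σ f) → HM σ (infEl σ S)
  | .base, _, _ => trivial
  | .arrow _ τ, _, hm =>
      ⟨fun x hx => hm_infEl τ (Set.forall_mem_image.2 fun f hf => (hm f hf).1 x hx),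
       fun x y hx hy hxy => infEl_image_mono τ fun f hf => (hm f hf).2 x y hx hy hxy⟩

end HereditarilyMonotone

section Limsup

open Cardinal in
lemma countable_Iio_of_lt_omega_one {μ : Ordinal} (hμ : μ < ω₁) : (Set.Iio μ).Countable := by
  rw [← le_aleph0_iff_set_countable, Cardinal.mk_Iio_ordinal, lift_le_aleph0, ← Order.lt_succ_iff,
    succ_aleph0, ← lt_ord, ord_aleph]
  exact hμ

lemma hm_limsupEl {σ : Ty} {μ : Ordinal} (hμ : μ < ω₁) {F : ∀ ξ < μ, El σ}
    (hF : ∀ ξ h, HM σ (F ξ h)) : HM σ (limsupEl σ μ F) := by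
  have := (countable_Iio_of_lt_omega_one hμ).to_subtype
  refine hm_infEl σ ?_
  rintro _ ⟨γ, -, rfl⟩
  refine hm_supEl σ ((Set.countable_range fun ξ : Set.Iio μ => F ξ ξ.2).mono ?_) ?_
  · rintro _ ⟨ξ, h, -, rfl⟩
    exact ⟨⟨ξ, h⟩, rfl⟩
  · rintro _ ⟨ξ, h, -, rfl⟩
    exact hF ξ h

lemma limsupEl_apply {σ τ : Ty} {μ : Ordinal} (F : ∀ ξ < μ, El (.arrow σ τ)) (x : El σ) :
    limsupEl (.arrow σ τ) μ F x = limsupEl τ μ (fun ξ h => F ξ h x) := by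
  have hsup : ∀ γ, supEl (.arrow σ τ) {z | ∃ ξ, ∃ h : ξ < μ, γ ≤ ξ ∧ z = F ξ h} x =
      supEl τ {z | ∃ ξ, ∃ h : ξ < μ, γ ≤ ξ ∧ z = F ξ h x} := fun γ => by
    show supEl τ _ = _
    congr 1
    ext z
    constructor
    · rintro ⟨_, ⟨ξ, h, hγ, rfl⟩, rfl⟩
      exact ⟨ξ, h, hγ, rfl⟩
    · rintro ⟨ξ, h, hγ, rfl⟩
      exact ⟨_, ⟨ξ, h, hγ, rfl⟩, rfl⟩
  show infEl τ _ = infEl τ _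
  congr 1
  ext y
  constructor
  · rintro ⟨_, ⟨γ, hγ, rfl⟩, rfl⟩
    exact ⟨γ, hγ, hsup γ⟩
  · rintro ⟨γ, hγ, rfl⟩
    exact ⟨_, ⟨γ, hγ, rfl⟩, hsup γ⟩

end Limsup

section Iter

lemma hm_const_id {ρ σ : Ty} : HM (.arrow ρ (.arrow σ σ)) (fun _ x => x) :=
  ⟨fun _ _ => ⟨fun _ hx => hx, fun _ _ _ _ hxy => hxy⟩,
   fun _ _ _ _ _ x hx => leHM_refl σ x hx⟩

lemma hm_comp_self {ρ σ τ : Ty} {F : El (.arrow (.arrow σ τ) (.arrow ρ σ))}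
    (hF : HM _ F) : HM (.arrow (.arrow σ τ) (.arrow ρ τ)) (fun f x => f (F f x)) := by
  refine ⟨fun f hf => ⟨fun x hx => hf.1 _ ((hF.1 f hf).1 x hx), fun x y hx hy hxy => ?_⟩,
    fun f g hf hg hfg x hx => ?_⟩
  · exact hf.2 _ _ ((hF.1 f hf).1 x hx) ((hF.1 f hf).1 y hy) ((hF.1 f hf).2 x y hx hy hxy)
  · have hFf := (hF.1 f hf).1 x hx
    have hFg := (hF.1 g hg).1 x hx
    exact leHM_trans τ (hf.2 _ _ hFf hFg (hF.2 f g hf hg hfg x hx)) (hfg _ hFg)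

variable (σ : Ty)

lemma iter_zero : Iter σ 0 = fun _ x => x := by
  unfold Iter
  rw [Ordinal.limitRecOn_zero]

lemma iter_add_one (α : Ordinal) : Iter σ (α + 1) = fun f x => f (Iter σ α f x) := by
  unfold Iter
  rw [Ordinal.limitRecOn_add_one]

lemma iter_of_isSuccLimit {μ : Ordinal} (hμ : Order.IsSuccLimit μ) :
    Iter σ μ = limsupEl (.arrow (.arrow σ σ) (.arrow σ σ)) μ (fun ξ _ => Iter σ ξ) := by
  funext f x
  rw [limsupEl_apply, limsupEl_apply]
  unfold Iter
  rw [Ordinal.limitRecOn_limit _ _ _ _ hμ]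

end Iter

/-- For every finite type `σ` and countable ordinal `α`, the iteration
functional `Iter_α^σ` is hereditarily monotone, i.e. an element of
`Ω^mon_{(σ→σ)→(σ→σ)}`. -/
theorem iter_hm (σ : Ty) (α : Ordinal) (hα : α < ω₁) :
    HM (.arrow (.arrow σ σ) (.arrow σ σ)) (Iter σ α) := by
  induction α using Ordinal.limitRecOn with
  | zero =>
    rw [iter_zero]
    exact hm_const_id
  | add_one α ih =>
    rw [iter_add_one]
    exact hm_comp_self (ih ((lt_add_one α).trans hα))
  | limit μ hμ ih =>
    rw [iter_of_isSuccLimit σ hμ]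
    exact hm_limsupEl hα fun ξ h => ih ξ h (h.trans hα)

end IterOrd
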